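/- Suppose g is strictly convex and an equilibrium p̂ exists. Then the pure strategy p̃ obtained from p̂ by replacing every entry p̂_x ∈ (0,1) by 1 is also an equilibrium, and it is equivalent to p̂ in the sense that J_p̃(x) = J_p̂(x) for all x ∈ E. -/

import Mathlib

/-!
Analytic model of the time-inconsistent stopping framework of Christensen & Lindensjö,
"Time-inconsistent stopping, myopic adjustment & equilibrium stability".

A time-homogeneous Markov chain `X` on a finite state space `E` is encoded by its
transition matrix `P` (`P x y = P_x(X_1 = y)`).  A mixed stopping strategy is a vector
`p ∈ [0,1]^E`; the associated stopping time is `τ_p = min {n ≥ 0 : Y_n ≤ p_{X_n}}`,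
where the `Y_n` are i.i.d. uniform randomization devices.  The quantity
`phi P p f x = E_x[f(X_{τ_p})]` (with the convention `f(X_{τ_p}) := lim_n f(X_n)` on
`{τ_p = ∞}`, the limit existing a.s. by absorption) is realized analytically, via
dominated convergence, as the limit in `n` of the finite-horizon values
`phiSeq P p f n x = E_x[f(X_{τ_p ∧ n})]`, which satisfy the one-step recursion given
by the Markov property.  Likewise `step P v x = E_x[v(X_1)]`.
-/

open Filter

variable {E : Type*}

/-- One-step expectation operator: `step P v x = E_x[v(X_1)] = ∑ y, P x y * v y`. -/
noncomputable def step [Fintype E] (P : E → E → ℝ) (v : E → ℝ) (x : E) : ℝ :=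
  ∑ y, P x y * v y

/-- Finite-horizon value `phiSeq P p f n x = E_x[f(X_{τ_p ∧ n})]`. -/
noncomputable def phiSeq [Fintype E] (P : E → E → ℝ) (p f : E → ℝ) : ℕ → E → ℝ
  | 0 => f
  | n + 1 => fun x => p x * f x + (1 - p x) * step P (phiSeq P p f n) x

/-- `phi P p f x = E_x[f(X_{τ_p})]`, with the convention `f(X_{τ_p}) := lim_n f(X_n)`
on `{τ_p = ∞}`; by dominated convergence it is the limit of the finite-horizon values. -/
noncomputable def phi [Fintype E] (P : E → E → ℝ) (p f : E → ℝ) (x : E) : ℝ :=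
  limUnder atTop fun n => phiSeq P p f n x

/-- `P` is a transition matrix (row-stochastic). -/
def IsTransition [Fintype E] (P : E → E → ℝ) : Prop :=
  (∀ x y, 0 ≤ P x y) ∧ ∀ x, ∑ y, P x y = 1

/-- `a` is an absorbing state of the chain. -/
def IsAbsorbingState (P : E → E → ℝ) (a : E) : Prop := P a a = 1

/-- The chain is absorbing: from each starting state, some absorbing state is reached
with positive probability in a finite number of steps. -/
def IsAbsorbingChain [Fintype E] [DecidableEq E] (P : E → E → ℝ) : Prop :=
  ∀ x : E, ∃ (a : E) (n : ℕ), IsAbsorbingState P a ∧ 0 < ((Matrix.of P) ^ n) x a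

/-- A mixed stopping strategy: a vector in `[0,1]^E`. -/
def IsStrategy (p : E → ℝ) : Prop := ∀ x, p x ∈ Set.Icc (0 : ℝ) 1

/-- `Kval P f h g p x q
      = q f(x) + (1-q) E_x[φ_p(X_1)] + g (q h(x) + (1-q) E_x[ψ_p(X_1)])`. -/
noncomputable def Kval [Fintype E] (P : E → E → ℝ) (f h : E → ℝ) (g : ℝ → ℝ)
    (p : E → ℝ) (x : E) (q : ℝ) : ℝ :=
  q * f x + (1 - q) * step P (phi P p f) x
    + g (q * h x + (1 - q) * step P (phi P p h) x)

/-- `Jval P f h g p x = φ_p(x) + g(ψ_p(x)) = E_x[f(X_{τ_p})] + g(E_x[h(X_{τ_p})])`. -/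
noncomputable def Jval [Fintype E] (P : E → E → ℝ) (f h : E → ℝ) (g : ℝ → ℝ)
    (p : E → ℝ) (x : E) : ℝ :=
  phi P p f x + g (phi P p h x)

/-- Subgame perfect Nash equilibrium (condition (EqI)). -/
def IsEquilibrium [Fintype E] (P : E → E → ℝ) (f h : E → ℝ) (g : ℝ → ℝ)
    (p : E → ℝ) : Prop :=
  ∀ x : E, ∀ q ∈ Set.Icc (0 : ℝ) 1, Kval P f h g p x q ≤ Jval P f h g p x

/-!
Where `p̂` randomizes strictly, the equilibrium condition for `q = 1` and `q = 0` says that neither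
pure stopping nor pure continuation beats the mixture. By strict convexity of `g` the mixture is
strictly worse than the same mixture of the two pure values unless `h x = E_x[ψ_p̂(X_1)]`, and then
also `f x = E_x[φ_p̂(X_1)]`. So `φ_p̂` and `ψ_p̂` still solve the one-step equations of `p̃`. On an
absorbing chain these equations, with the boundary values `f`, `h` on absorbing states, have unique
solutions, because the probability of not yet being absorbed decays geometrically. Hence `p̃` has
the same `φ` and `ψ`, and therefore the same `J` and `K`, as `p̂`.
-/

open Matrix Topology

section Absorption

variable [Fintype E] {P : E → E → ℝ}

theorem step_eq_mulVec (v : E → ℝ) : step P v = Matrix.of P *ᵥ v := rfl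

variable [DecidableEq E]

theorem IsTransition.mem_rowStochastic (hP : IsTransition P) :
    Matrix.of P ∈ rowStochastic ℝ E :=
  mem_rowStochastic_iff_sum.2 hP

theorem mulVec_mono_of_mem_rowStochastic {M : Matrix E E ℝ} (hM : M ∈ rowStochastic ℝ E)
    {v w : E → ℝ} (hvw : v ≤ w) : M *ᵥ v ≤ M *ᵥ w := by
  intro x
  have := nonneg_mulVec_of_mem_rowStochastic hM (x := w - v) (fun y => sub_nonneg.2 (hvw y)) x
  rwa [mulVec_sub, Pi.sub_apply, sub_nonneg] at this

theorem abs_mulVec_le_of_mem_rowStochastic {M : Matrix E E ℝ} (hM : M ∈ rowStochastic ℝ E)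
    (v : E → ℝ) (x : E) : |(M *ᵥ v) x| ≤ (M *ᵥ fun y => |v y|) x := by
  refine (Finset.abs_sum_le_sum_abs _ _).trans (le_of_eq (Finset.sum_congr rfl fun y _ => ?_))
  rw [abs_mul, abs_of_nonneg (hM.1 x y)]

theorem IsAbsorbingState.mulVec_apply (hP : IsTransition P) {a : E} (ha : IsAbsorbingState P a)
    (v : E → ℝ) : (Matrix.of P *ᵥ v) a = v a := by
  have haa : P a a = 1 := ha
  have hrow : ∑ y ∈ Finset.univ.erase a, P a y = 0 := by
    linarith [Finset.add_sum_erase Finset.univ (P a) (Finset.mem_univ a), hP.2 a]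
  have hzero := (Finset.sum_eq_zero_iff_of_nonneg fun y _ => hP.1 a y).1 hrow
  refine (Finset.sum_eq_single a (fun y _ hy => ?_) (by simp)).trans ?_
  · simp [hzero y (Finset.mem_erase.2 ⟨hy, Finset.mem_univ y⟩)]
  · simp [haa]

theorem IsAbsorbingState.pow_mulVec_apply (hP : IsTransition P) {a : E}
    (ha : IsAbsorbingState P a) (n : ℕ) (v : E → ℝ) : (Matrix.of P ^ n *ᵥ v) a = v a := by
  induction n with
  | zero => simp
  | succ n ih => rw [pow_succ', ← mulVec_mulVec, ha.mulVec_apply hP, ih]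

variable (P) in
noncomputable def notAbsorbedProb (n : ℕ) : E → ℝ :=
  Matrix.of P ^ n *ᵥ {y | ¬IsAbsorbingState P y}.indicator 1

theorem notAbsorbedProb_zero :
    notAbsorbedProb P 0 = {y | ¬IsAbsorbingState P y}.indicator 1 := by
  simp [notAbsorbedProb]

theorem notAbsorbedProb_add (m n : ℕ) :
    notAbsorbedProb P (m + n) = Matrix.of P ^ m *ᵥ notAbsorbedProb P n := by
  rw [notAbsorbedProb, notAbsorbedProb, pow_add, mulVec_mulVec]

theorem notAbsorbedProb_nonneg (hP : IsTransition P) (n : ℕ) : 0 ≤ notAbsorbedProb P n :=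
  nonneg_mulVec_of_mem_rowStochastic (pow_mem hP.mem_rowStochastic n)
    fun _ => Set.indicator_nonneg (fun _ _ => zero_le_one) _

theorem notAbsorbedProb_le_one (hP : IsTransition P) (n : ℕ) (x : E) :
    notAbsorbedProb P n x ≤ 1 := by
  have hle : {y | ¬IsAbsorbingState P y}.indicator (1 : E → ℝ) ≤ 1 :=
    Set.indicator_le_self' fun _ _ => zero_le_one
  have := mulVec_mono_of_mem_rowStochastic (pow_mem hP.mem_rowStochastic n) hle x
  rwa [one_vecMul_of_mem_rowStochastic (pow_mem hP.mem_rowStochastic n)] at this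

theorem notAbsorbedProb_of_absorbing (hP : IsTransition P) {a : E} (ha : IsAbsorbingState P a)
    (n : ℕ) : notAbsorbedProb P n a = 0 := by
  rw [notAbsorbedProb, ha.pow_mulVec_apply hP]
  exact Set.indicator_of_notMem (fun h : ¬IsAbsorbingState P a => h ha) _

theorem notAbsorbedProb_lt_one (hP : IsTransition P) {a : E} (ha : IsAbsorbingState P a)
    {n : ℕ} {x : E} (hreach : 0 < (Matrix.of P ^ n) x a) : notAbsorbedProb P n x < 1 := by
  have hle : {y | ¬IsAbsorbingState P y}.indicator 1 ≤ (1 : E → ℝ) - Pi.single a 1 := by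
    intro y
    by_cases hy : y = a
    · subst hy; simp [ha]
    · by_cases hya : IsAbsorbingState P y <;> simp [hya, hy]
  have := mulVec_mono_of_mem_rowStochastic (pow_mem hP.mem_rowStochastic n) hle x
  rw [mulVec_sub, one_vecMul_of_mem_rowStochastic (pow_mem hP.mem_rowStochastic n),
    mulVec_single_one] at this
  simp only [Pi.sub_apply, Pi.one_apply, col_apply] at this
  exact this.trans_lt (by linarith)

theorem notAbsorbedProb_le_smul (hP : IsTransition P) {N : ℕ} {s : ℝ}
    (hs : ∀ x, notAbsorbedProb P N x ≤ s) : notAbsorbedProb P N ≤ s • notAbsorbedProb P 0 := by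
  intro x
  by_cases hx : IsAbsorbingState P x
  · simp [notAbsorbedProb_of_absorbing hP hx]
  · simpa [notAbsorbedProb_zero, hx] using hs x

theorem antitone_notAbsorbedProb (hP : IsTransition P) : Antitone (notAbsorbedProb P) := by
  refine antitone_nat_of_succ_le fun n => ?_
  rw [notAbsorbedProb_add n 1, ← add_zero n, notAbsorbedProb_add n 0, add_zero]
  refine mulVec_mono_of_mem_rowStochastic (pow_mem hP.mem_rowStochastic n) ?_
  simpa using notAbsorbedProb_le_smul hP (N := 1) (s := 1) (notAbsorbedProb_le_one hP 1)

theorem notAbsorbedProb_mul_le_pow (hP : IsTransition P) {N : ℕ} {s : ℝ} (hs0 : 0 ≤ s)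
    (hs : ∀ x, notAbsorbedProb P N x ≤ s) (k : ℕ) :
    notAbsorbedProb P (k * N) ≤ s ^ k • notAbsorbedProb P 0 := by
  induction k with
  | zero => simp
  | succ k ih =>
    calc notAbsorbedProb P ((k + 1) * N)
        = Matrix.of P ^ (k * N) *ᵥ notAbsorbedProb P N := by
          rw [add_mul, one_mul, notAbsorbedProb_add]
      _ ≤ Matrix.of P ^ (k * N) *ᵥ (s • notAbsorbedProb P 0) :=
          mulVec_mono_of_mem_rowStochastic (pow_mem hP.mem_rowStochastic _)
            (notAbsorbedProb_le_smul hP hs)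
      _ = s • notAbsorbedProb P (k * N) := by
          rw [mulVec_smul, ← notAbsorbedProb_add, add_zero]
      _ ≤ s • s ^ k • notAbsorbedProb P 0 := smul_le_smul_of_nonneg_left ih hs0
      _ = s ^ (k + 1) • notAbsorbedProb P 0 := by rw [smul_smul, pow_succ']

theorem tendsto_notAbsorbedProb (hP : IsTransition P) (habs : IsAbsorbingChain P) (x : E) :
    Tendsto (fun n => notAbsorbedProb P n x) atTop (𝓝 0) := by
  have : Nonempty E := ⟨x⟩
  choose a n ha hreach using habs
  set N := Finset.univ.sup n
  set s := Finset.univ.sup' Finset.univ_nonempty (notAbsorbedProb P N)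
  have hs : ∀ y, notAbsorbedProb P N y ≤ s := fun y => Finset.le_sup' _ (Finset.mem_univ y)
  have hs1 : s < 1 := (Finset.sup'_lt_iff _).2 fun y _ =>
    (antitone_notAbsorbedProb hP (Finset.le_sup (Finset.mem_univ y)) y).trans_lt
      (notAbsorbedProb_lt_one hP (ha y) (hreach y))
  have hs0 : 0 ≤ s := (notAbsorbedProb_nonneg hP N x).trans (hs x)
  rw [Metric.tendsto_atTop]
  intro ε hε
  obtain ⟨k, hk⟩ := exists_pow_lt_of_lt_one hε hs1
  refine ⟨k * N, fun m hm => ?_⟩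
  rw [Real.dist_eq, sub_zero, abs_of_nonneg (notAbsorbedProb_nonneg hP m x)]
  calc notAbsorbedProb P m x ≤ notAbsorbedProb P (k * N) x := antitone_notAbsorbedProb hP hm x
    _ ≤ s ^ k * notAbsorbedProb P 0 x := notAbsorbedProb_mul_le_pow hP hs0 hs k x
    _ ≤ s ^ k := mul_le_of_le_one_right (pow_nonneg hs0 k) (notAbsorbedProb_le_one hP 0 x)
    _ < ε := hk

end Absorption

section Value

variable [Fintype E] {P : E → E → ℝ} {p f : E → ℝ}

variable (P p f) in
noncomputable def stopStep (v : E → ℝ) (x : E) : ℝ :=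
  p x * f x + (1 - p x) * step P v x

theorem phiSeq_eq_iterate (n : ℕ) : phiSeq P p f n = (stopStep P p f)^[n] f := by
  induction n with
  | zero => rfl
  | succ n ih => rw [Function.iterate_succ_apply', ← ih]; rfl

theorem continuous_stopStep : Continuous (stopStep P p f) := by
  unfold stopStep step
  fun_prop

variable [DecidableEq E]

theorem iterate_stopStep_apply_of_absorbing (hP : IsTransition P) {a : E}
    (ha : IsAbsorbingState P a) {v : E → ℝ} (hv : v a = f a) (n : ℕ) :
    (stopStep P p f)^[n] v a = f a := by
  induction n with
  | zero => exact hv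
  | succ n ih =>
    rw [Function.iterate_succ_apply', stopStep, step_eq_mulVec, ha.mulVec_apply hP, ih]
    ring

theorem abs_stopStep_sub_le (hP : IsTransition P) (hp : IsStrategy p) (v w : E → ℝ) (x : E) :
    |stopStep P p f v x - stopStep P p f w x| ≤ (Matrix.of P *ᵥ fun y => |v y - w y|) x := by
  have hdiff : stopStep P p f v x - stopStep P p f w x =
      (1 - p x) * (Matrix.of P *ᵥ (v - w)) x := by
    simp only [stopStep, step_eq_mulVec, mulVec_sub, Pi.sub_apply]
    ring
  rw [hdiff, abs_mul, abs_of_nonneg (sub_nonneg.2 (hp x).2)]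
  exact (mul_le_of_le_one_left (abs_nonneg _) (by linarith [(hp x).1])).trans
    (abs_mulVec_le_of_mem_rowStochastic hP.mem_rowStochastic _ x)

theorem abs_iterate_stopStep_sub_le (hP : IsTransition P) (hp : IsStrategy p) {v w : E → ℝ}
    (hvw : ∀ a, IsAbsorbingState P a → v a = w a) {C : ℝ} (hC : ∀ x, |v x - w x| ≤ C)
    (n : ℕ) (x : E) :
    |(stopStep P p f)^[n] v x - (stopStep P p f)^[n] w x| ≤ C * notAbsorbedProb P n x := by
  induction n generalizing x with
  | zero =>
    by_cases hx : IsAbsorbingState P x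
    · simp [hvw x hx, notAbsorbedProb_of_absorbing hP hx]
    · simpa [notAbsorbedProb_zero, hx] using hC x
  | succ n ih =>
    rw [Function.iterate_succ_apply', Function.iterate_succ_apply', add_comm,
      notAbsorbedProb_add, pow_one]
    calc _ ≤ _ := abs_stopStep_sub_le hP hp _ _ x
      _ ≤ (Matrix.of P *ᵥ (C • notAbsorbedProb P n)) x :=
          mulVec_mono_of_mem_rowStochastic hP.mem_rowStochastic ih x
      _ = C * (Matrix.of P *ᵥ notAbsorbedProb P n) x := by rw [mulVec_smul]; rfl

theorem abs_phiSeq_le (hP : IsTransition P) (hp : IsStrategy p) (n : ℕ) (x : E) :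
    |phiSeq P p f n x| ≤ ‖f‖ := by
  induction n generalizing x with
  | zero => exact norm_le_pi_norm f x
  | succ n ih =>
    have hstep : |step P (phiSeq P p f n) x| ≤ ‖f‖ := by
      calc _ ≤ (Matrix.of P *ᵥ fun y => |phiSeq P p f n y|) x :=
            abs_mulVec_le_of_mem_rowStochastic hP.mem_rowStochastic _ x
        _ ≤ (Matrix.of P *ᵥ fun _ => ‖f‖) x :=
            mulVec_mono_of_mem_rowStochastic hP.mem_rowStochastic ih x
        _ = ‖f‖ := by
          simp [mulVec, dotProduct, ← Finset.sum_mul, hP.2 x]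
    have h0 := (hp x).1
    have h1 := (hp x).2
    calc |phiSeq P p f (n + 1) x|
        ≤ p x * |f x| + (1 - p x) * |step P (phiSeq P p f n) x| := by
          refine (abs_add_le _ _).trans (le_of_eq ?_)
          rw [abs_mul, abs_mul, abs_of_nonneg h0, abs_of_nonneg (sub_nonneg.2 h1)]
      _ ≤ p x * ‖f‖ + (1 - p x) * ‖f‖ := by
          gcongr
          exact norm_le_pi_norm f x
      _ = ‖f‖ := by ring

variable (f) in
theorem tendsto_phiSeq (hP : IsTransition P) (habs : IsAbsorbingChain P) (hp : IsStrategy p) :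
    Tendsto (fun n => phiSeq P p f n) atTop (𝓝 (phi P p f)) := by
  refine tendsto_pi_nhds.2 fun x => ?_
  suffices hcauchy : CauchySeq fun n => phiSeq P p f n x by
    obtain ⟨l, hl⟩ := cauchySeq_tendsto_of_complete hcauchy
    rwa [phi, hl.limUnder_eq]
  refine Metric.cauchySeq_iff'.2 fun ε hε => ?_
  obtain ⟨N, hN⟩ := (((tendsto_notAbsorbedProb hP habs x).const_mul (2 * ‖f‖)).eventually
    (gt_mem_nhds (by rwa [mul_zero]))).exists
  refine ⟨N, fun n hn => ?_⟩
  obtain ⟨j, rfl⟩ := Nat.exists_eq_add_of_le hn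
  rw [Real.dist_eq, phiSeq_eq_iterate (N + j), phiSeq_eq_iterate N, Function.iterate_add_apply,
    ← phiSeq_eq_iterate j]
  refine (abs_iterate_stopStep_sub_le hP hp (fun a ha => ?_) (fun y => ?_) N x).trans_lt hN
  · rw [phiSeq_eq_iterate, iterate_stopStep_apply_of_absorbing hP ha rfl]
  · have hfy : |f y| ≤ ‖f‖ := norm_le_pi_norm f y
    linarith [abs_sub (phiSeq P p f j y) (f y), abs_phiSeq_le (f := f) hP hp j y]

variable (f) in
theorem isFixedPt_phi (hP : IsTransition P) (habs : IsAbsorbingChain P) (hp : IsStrategy p) :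
    Function.IsFixedPt (stopStep P p f) (phi P p f) := by
  have hlim := tendsto_phiSeq f hP habs hp
  refine tendsto_nhds_unique ((continuous_stopStep.tendsto _).comp hlim) ?_
  simpa only [phiSeq_eq_iterate, Function.comp_def, ← Function.iterate_succ_apply']
    using hlim.comp (tendsto_add_atTop_nat 1)

variable (f) in
theorem phi_of_absorbing (hP : IsTransition P) (habs : IsAbsorbingChain P) (hp : IsStrategy p)
    {a : E} (ha : IsAbsorbingState P a) : phi P p f a = f a := by
  refine tendsto_nhds_unique ((continuous_apply a).tendsto _ |>.comp
    (tendsto_phiSeq f hP habs hp)) ?_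
  simp only [Function.comp_def, phiSeq_eq_iterate, iterate_stopStep_apply_of_absorbing hP ha rfl]
  exact tendsto_const_nhds

theorem phi_eq_of_isFixedPt (hP : IsTransition P) (habs : IsAbsorbingChain P)
    (hp : IsStrategy p) {v : E → ℝ} (hv : Function.IsFixedPt (stopStep P p f) v)
    (hva : ∀ a, IsAbsorbingState P a → v a = f a) : phi P p f = v := by
  refine tendsto_nhds_unique (tendsto_phiSeq f hP habs hp) (tendsto_pi_nhds.2 fun x => ?_)
  rw [tendsto_iff_dist_tendsto_zero]
  refine squeeze_zero (fun n => dist_nonneg) (fun n => ?_)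
    (by simpa using (tendsto_notAbsorbedProb hP habs x).const_mul ‖f - v‖)
  have := abs_iterate_stopStep_sub_le (f := f) hP hp (fun a ha => (hva a ha).symm)
    (fun y => norm_le_pi_norm (f - v) y) n x
  rwa [(hv.iterate n).eq, ← phiSeq_eq_iterate, ← Real.dist_eq] at this

end Value

theorem StrictConvexOn.eq_and_eq_of_le_mixture {s : Set ℝ} {g : ℝ → ℝ}
    (hg : StrictConvexOn ℝ s g) {t F A H B : ℝ} (hH : H ∈ s) (hB : B ∈ s) (ht0 : 0 < t)
    (ht1 : t < 1)
    (hstop : F + g H ≤ t * F + (1 - t) * A + g (t * H + (1 - t) * B))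
    (hcont : A + g B ≤ t * F + (1 - t) * A + g (t * H + (1 - t) * B)) :
    F = A ∧ H = B := by
  have hHB : H = B := by
    by_contra hne
    have hlt := hg.2 hH hB hne ht0 (sub_pos.2 ht1) (add_sub_cancel t 1)
    simp only [smul_eq_mul] at hlt
    -- with `J` the common right-hand side: `J < t (F + g H) + (1 - t) (A + g B) ≤ J`
    nlinarith [mul_le_mul_of_nonneg_left hstop ht0.le,
      mul_le_mul_of_nonneg_left hcont (sub_pos.2 ht1).le]
  subst hHB
  have hmix : t * H + (1 - t) * H = H := by ring
  rw [hmix] at hstop hcont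
  refine ⟨le_antisymm ?_ ?_, rfl⟩
  · nlinarith
  · nlinarith

section Equilibrium

variable [Fintype E] [DecidableEq E] {P : E → E → ℝ} {f h : E → ℝ} {g : ℝ → ℝ} {p : E → ℝ}

theorem IsEquilibrium.step_phi_eq (hP : IsTransition P) (habs : IsAbsorbingChain P)
    (hp : IsStrategy p) (heq : IsEquilibrium P f h g p) (hg : StrictConvexOn ℝ Set.univ g)
    {x : E} (hx0 : 0 < p x) (hx1 : p x < 1) :
    step P (phi P p f) x = f x ∧ step P (phi P p h) x = h x := by
  have hJ : Jval P f h g p x = Kval P f h g p x (p x) := by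
    rw [Jval, ← congrFun (isFixedPt_phi f hP habs hp).eq x,
      ← congrFun (isFixedPt_phi h hP habs hp).eq x]
    rfl
  have hstop := heq x 1 ⟨zero_le_one, le_rfl⟩
  have hcont := heq x 0 ⟨le_rfl, zero_le_one⟩
  rw [hJ] at hstop hcont
  simp only [Kval, one_mul, sub_self, zero_mul, add_zero, sub_zero, zero_add] at hstop hcont
  obtain ⟨hf, hh⟩ := hg.eq_and_eq_of_le_mixture trivial trivial hx0 hx1 hstop hcont
  exact ⟨hf.symm, hh.symm⟩

theorem phi_eq_phi_of_eq_or_step_phi_eq (hP : IsTransition P) (habs : IsAbsorbingChain P)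
    {q : E → ℝ} (hp : IsStrategy p) (hq : IsStrategy q)
    (hpq : ∀ x, q x = p x ∨ step P (phi P p f) x = f x) : phi P q f = phi P p f := by
  refine phi_eq_of_isFixedPt hP habs hq (funext fun x => ?_)
    fun a ha => phi_of_absorbing f hP habs hp ha
  have hfix := congrFun (isFixedPt_phi f hP habs hp).eq x
  rcases hpq x with hx | hx
  · rwa [stopStep, hx]
  · simp only [stopStep, hx] at hfix ⊢
    linarith

end Equilibrium

theorem pure_equilibrium_of_strictly_convex_general [Fintype E] [DecidableEq E]
    (P : E → E → ℝ) (hP : IsTransition P) (habs : IsAbsorbingChain P)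
    (f h : E → ℝ) (g : ℝ → ℝ) (hgc : StrictConvexOn ℝ Set.univ g)
    (phat : E → ℝ) (hphat : IsStrategy phat) (heq : IsEquilibrium P f h g phat)
    (ptilde : E → ℝ)
    (hpt1 : ∀ x : E, 0 < phat x → phat x < 1 → ptilde x = 1)
    (hpt2 : ∀ x : E, phat x = 0 ∨ phat x = 1 → ptilde x = phat x) :
    IsEquilibrium P f h g ptilde ∧ (∀ x : E, ptilde x = 0 ∨ ptilde x = 1) ∧
      ∀ x : E, Jval P f h g ptilde x = Jval P f h g phat x := by
  have hcases : ∀ x, (phat x = 0 ∨ phat x = 1) ∨ 0 < phat x ∧ phat x < 1 := fun x => by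
    obtain ⟨h0, h1⟩ := hphat x
    grind
  have hpure : ∀ x, ptilde x = 0 ∨ ptilde x = 1 := fun x =>
    (hcases x).elim (fun hx => hpt2 x hx ▸ hx) fun hx => Or.inr (hpt1 x hx.1 hx.2)
  have hptilde : IsStrategy ptilde := fun x => by rcases hpure x with hx | hx <;> simp [hx]
  have hphi : ∀ k : E → ℝ, (∀ x, 0 < phat x → phat x < 1 → step P (phi P phat k) x = k x) →
      phi P ptilde k = phi P phat k := fun k hk =>
    phi_eq_phi_of_eq_or_step_phi_eq hP habs hphat hptilde fun x =>
      (hcases x).imp (hpt2 x) fun hx => hk x hx.1 hx.2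
  have hf := hphi f fun x h0 h1 => (heq.step_phi_eq hP habs hphat hgc h0 h1).1
  have hh := hphi h fun x h0 h1 => (heq.step_phi_eq hP habs hphat hgc h0 h1).2
  have hJ : ∀ x, Jval P f h g ptilde x = Jval P f h g phat x := fun x => by
    simp only [Jval, hf, hh]
  refine ⟨fun x q hq => ?_, hpure, hJ⟩
  rw [hJ, show Kval P f h g ptilde x q = Kval P f h g phat x q by simp only [Kval, hf, hh]]
  exact heq x q hq

/-- Theorem 4.8: if `g` is strictly convex and `p̂` is an equilibrium, then the pure
strategy `p̃` obtained from `p̂` by changing every entry in `(0,1)` to `1` is an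
equivalent equilibrium (same equilibrium value function). -/
theorem pure_equilibrium_of_strictly_convex [Fintype E] [DecidableEq E]
    (P : E → E → ℝ) (hP : IsTransition P) (habs : IsAbsorbingChain P)
    (f h : E → ℝ) (g : ℝ → ℝ) (hg : Continuous g) (hgc : StrictConvexOn ℝ Set.univ g)
    (phat : E → ℝ) (hphat : IsStrategy phat) (heq : IsEquilibrium P f h g phat)
    (ptilde : E → ℝ)
    (hpt1 : ∀ x : E, 0 < phat x → phat x < 1 → ptilde x = 1)
    (hpt2 : ∀ x : E, phat x = 0 ∨ phat x = 1 → ptilde x = phat x) :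
    IsEquilibrium P f h g ptilde ∧ (∀ x : E, ptilde x = 0 ∨ ptilde x = 1) ∧
      ∀ x : E, Jval P f h g ptilde x = Jval P f h g phat x :=
  pure_equilibrium_of_strictly_convex_general P hP habs f h g hgc phat hphat heq ptilde hpt1 hpt2
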